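/- arXiv:math/0606403 — 6 statements merged into one kernel-verified Lean document; each statement's English description precedes it below -/
import Mathlib

section
/- In the root system of type D_{n+2} (n ≥ 2), the number N_p' of positive roots of height p+1 whose expansion contains the simple root attached to the trivalent (nodal) vertex satisfies: N_0' = 1, N_p' = 3 + ⌊p/2⌋ for 1 ≤ p ≤ n-1, N_n' = 2 + ⌊n/2⌋, and N_p' = 1 + ⌊n - p/2⌋ for n < p ≤ 2n - 1. -/
open Finset

/-- The positive roots of the root system of type `D_m` in the standard model:
`e_i - e_j` (encoded `(i, j, false)`) and `e_i + e_j` (encoded `(i, j, true)`) for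
`1 ≤ i < j ≤ m`. -/
def Droots (m : ℕ) : Finset (ℕ × ℕ × Bool) :=
  ((Finset.Icc 1 m) ×ˢ (Finset.Icc 1 m) ×ˢ ({false, true} : Finset Bool)).filter
    (fun t => t.1 < t.2.1)

/-- The height of a positive root of `D_m`: with simple roots
`α_i = e_i - e_{i+1}` (`i ≤ m-1`) and `α_m = e_{m-1} + e_m`, the root `e_i - e_j` has
height `j - i` and `e_i + e_j` has height `2m - i - j`. -/
def DrootHeight (m : ℕ) (t : ℕ × ℕ × Bool) : ℕ :=
  if t.2.2 then 2 * m - t.1 - t.2.1 else t.2.1 - t.1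

/-- Whether a positive root of `D_m` contains the simple root `α_{m-2}` attached to the
trivalent (nodal) vertex of the Dynkin diagram in its expansion: `e_i - e_j` contains it
iff `i ≤ m - 2` and `j ≥ m - 1`, and `e_i + e_j` contains it iff `(i,j) ≠ (m-1, m)`. -/
def DcontainsNodal (m : ℕ) (t : ℕ × ℕ × Bool) : Prop :=
  if t.2.2 then ¬(t.1 = m - 1 ∧ t.2.1 = m) else t.1 ≤ m - 2 ∧ m - 1 ≤ t.2.1

instance (m : ℕ) (t : ℕ × ℕ × Bool) : Decidable (DcontainsNodal m t) := by
  unfold DcontainsNodal; infer_instance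

/-- `N'_p`: the number of positive roots of `D_{n+2}` of height `p+1` containing the
nodal simple root. -/
def NpD (n p : ℕ) : ℕ :=
  ((Droots (n + 2)).filter
    (fun t => DcontainsNodal (n + 2) t ∧ DrootHeight (n + 2) t = p + 1)).card

/-!
In the standard model of `D_m`, a nodal root of height `h ≥ 2` is either `e_i - e_{i+h}` or
`e_i + e_{2m-h-i}`, and in both families the admissible `i` form an interval. Counting the two
intervals gives a closed formula in `m` and `h`, which for `m = n + 2`, `h = p + 1` reduces by
linear arithmetic to the stated values. Height `1` is special: there `e_{m-1} + e_m = α_m` is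
the only root of the second family, and it does not contain the nodal root.
-/

def DnodalRoots (m h : ℕ) : Finset (ℕ × ℕ × Bool) :=
  (Droots m).filter (fun t => DcontainsNodal m t ∧ DrootHeight m t = h)

lemma NpD_eq_card_DnodalRoots (n p : ℕ) : NpD n p = (DnodalRoots (n + 2) (p + 1)).card := rfl

lemma DnodalRoots_one {m : ℕ} (hm : 3 ≤ m) : DnodalRoots m 1 = {(m - 2, m - 1, false)} := by
  ext ⟨i, j, b⟩
  cases b <;> simp [DnodalRoots, Droots, DcontainsNodal, DrootHeight] <;> omega

lemma DnodalRoots_eq {m h : ℕ} (hh : 2 ≤ h) :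
    DnodalRoots m h =
      (Icc (max 1 (m - 1 - h)) (min (m - 2) (m - h))).image (fun i => (i, i + h, false)) ∪
        (Icc (max 1 (m - h)) ((2 * m - h - 1) / 2)).image (fun i => (i, 2 * m - h - i, true)) := by
  ext ⟨i, j, b⟩
  cases b <;> simp [DnodalRoots, Droots, DcontainsNodal, DrootHeight] <;> omega

lemma card_DnodalRoots {m h : ℕ} (hh : 2 ≤ h) :
    (DnodalRoots m h).card =
      (min (m - 2) (m - h) + 1 - max 1 (m - 1 - h)) + ((2 * m - h - 1) / 2 + 1 - max 1 (m - h)) := by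
  have image_card (s : Finset ℕ) (f : ℕ → ℕ) (b : Bool) :
      (s.image fun i => (i, f i, b)).card = s.card :=
    card_image_of_injective _ fun x y hxy => congrArg Prod.fst hxy
  rw [DnodalRoots_eq hh, card_union_of_disjoint, image_card, image_card, Nat.card_Icc,
    Nat.card_Icc]
  simp only [disjoint_left, mem_image]
  rintro _ ⟨x, -, rfl⟩ ⟨y, -, hxy⟩
  simp at hxy

lemma floor_natCast_sub_natCast_div_two (n p : ℕ) :
    ⌊(n : ℚ) - (p : ℚ) / 2⌋ = (2 * n - p : ℤ) / 2 := by
  have h : (n : ℚ) - (p : ℚ) / 2 = ((2 * n - p : ℤ) : ℚ) / ((2 : ℕ) : ℚ) := by push_cast; ring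
  rw [h, Rat.floor_intCast_div_natCast, Nat.cast_ofNat]

/-- in type `D_{n+2}` (`n ≥ 2`), the number `N'_p` of positive roots of
height `p+1` containing the nodal simple root satisfies `N'_0 = 1`,
`N'_p = 3 + ⌊p/2⌋` for `1 ≤ p ≤ n-1`, `N'_n = 2 + ⌊n/2⌋`, and
`N'_p = 1 + ⌊n - p/2⌋` for `n < p ≤ 2n - 1`. -/
theorem D_nodal_root_count (n : ℕ) (hn : 2 ≤ n) (p : ℕ) :
    (p = 0 → NpD n p = 1) ∧
    (1 ≤ p → p ≤ n - 1 → NpD n p = 3 + p / 2) ∧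
    (p = n → NpD n p = 2 + n / 2) ∧
    (n < p → p ≤ 2 * n - 1 → (NpD n p : ℤ) = 1 + ⌊(n : ℚ) - (p : ℚ) / 2⌋) := by
  refine ⟨fun hp => ?_, fun hp _ => ?_, fun hp => ?_, fun hp hp' => ?_⟩
  · rw [hp, NpD_eq_card_DnodalRoots, DnodalRoots_one (by omega), card_singleton]
  all_goals rw [NpD_eq_card_DnodalRoots, card_DnodalRoots (by omega)]
  · omega
  · omega
  · rw [floor_natCast_sub_natCast_div_two]
    omega
end

section
/- Let B' be the associative unital C-algebra with generators a, b, z and relations a² = b² = z²/4, [z,a] = [z,b] = 0. Then the elements z^p (a+b)^{2q}, a z^p (a+b)^{2q}, b z^p (a+b)^{2q}, a b z^p (a+b)^{2q} for p, q ≥ 0 form a basis of B', and the center of B' is spanned by the elements z^p (a+b)^{2q}, p, q ≥ 0. -/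
/-!
`B'` acts on `ℂ[x, y]²` by `a ↦ A = [[0, 1], [x², 0]]`, `b ↦ B = [[x, 0], [y - 2x², -x]]`,
`z ↦ 2x`, so that `(a + b)² ↦ y`. It sends `z^p (a+b)^{2q} w` (`w ∈ {1, a, b, ab}`) to
`(2x)^p y^q W` (`W ∈ {1, A, B, AB}`), and these are linearly independent over `ℂ` because
`1, A, B, AB` are linearly independent over `ℂ[x, y]`.

The family spans: `z` and `(a + b)²` are central, `a² = b² = z²/4` and
`ba = (a + b)² - z²/2 - ab`, so its span is stable under left multiplication by the generators.
Spanning plus independence of the image makes the representation faithful. A central element goes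
to a matrix commuting with `A` and `B`, i.e. to a scalar, and this kills its components along
`a`, `b` and `ab`.
-/

/-- The defining relations of the algebra `B'`: generators `a = ι 0`, `b = ι 1`,
`z = ι 2` with `a² = b² = z²/4` and `z` commuting with `a` and `b`. -/
inductive BpRel : FreeAlgebra ℂ (Fin 3) → FreeAlgebra ℂ (Fin 3) → Prop
  | ha : BpRel (FreeAlgebra.ι ℂ 0 * FreeAlgebra.ι ℂ 0)
      ((4 : ℂ)⁻¹ • (FreeAlgebra.ι ℂ 2 * FreeAlgebra.ι ℂ 2))
  | hb : BpRel (FreeAlgebra.ι ℂ 1 * FreeAlgebra.ι ℂ 1)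
      ((4 : ℂ)⁻¹ • (FreeAlgebra.ι ℂ 2 * FreeAlgebra.ι ℂ 2))
  | hza : BpRel (FreeAlgebra.ι ℂ 2 * FreeAlgebra.ι ℂ 0)
      (FreeAlgebra.ι ℂ 0 * FreeAlgebra.ι ℂ 2)
  | hzb : BpRel (FreeAlgebra.ι ℂ 2 * FreeAlgebra.ι ℂ 1)
      (FreeAlgebra.ι ℂ 1 * FreeAlgebra.ι ℂ 2)

/-- The algebra `B'`. -/
abbrev Bprime := RingQuot BpRel

noncomputable def aB : Bprime := RingQuot.mkAlgHom ℂ BpRel (FreeAlgebra.ι ℂ 0)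
noncomputable def bB : Bprime := RingQuot.mkAlgHom ℂ BpRel (FreeAlgebra.ι ℂ 1)
noncomputable def zB : Bprime := RingQuot.mkAlgHom ℂ BpRel (FreeAlgebra.ι ℂ 2)

/-- The candidate basis `z^p (a+b)^{2q}`, `a z^p (a+b)^{2q}`, `b z^p (a+b)^{2q}`,
`a b z^p (a+b)^{2q}` for `p, q ≥ 0`. -/
noncomputable def BprimeBasisFam : ℕ × ℕ × Fin 4 → Bprime := fun t =>
  (if t.2.2 = 0 then 1 else if t.2.2 = 1 then aB else if t.2.2 = 2 then bB else aB * bB)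
    * zB ^ t.1 * (aB + bB) ^ (2 * t.2.1)

section General

variable {R A : Type*} [CommSemiring R] [Semiring A] [Algebra R A]

def Submodule.leftMulStab (S : Submodule R A) : Subalgebra R A where
  carrier := {c | ∀ v ∈ S, c * v ∈ S}
  mul_mem' hc hd v hv := by rw [mul_assoc]; exact hc _ (hd v hv)
  add_mem' hc hd v hv := by rw [add_mul]; exact S.add_mem (hc v hv) (hd v hv)
  algebraMap_mem' r v hv := by rw [← Algebra.smul_def]; exact S.smul_mem r hv

theorem Submodule.mem_leftMulStab_span {ι : Type*} {v : ι → A} {c : A}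
    (h : ∀ i, c * v i ∈ span R (Set.range v)) : c ∈ (span R (Set.range v)).leftMulStab := by
  intro x hx
  induction hx using Submodule.span_induction with
  | mem x hx => obtain ⟨i, rfl⟩ := hx; exact h i
  | zero => simp
  | add x y _ _ hx hy => rw [mul_add]; exact add_mem hx hy
  | smul r x _ hx => rw [mul_smul_comm]; exact Submodule.smul_mem _ r hx

theorem Submodule.eq_top_of_subset_leftMulStab {S : Submodule R A} {s : Set A}
    (hs : Algebra.adjoin R s = ⊤) (h1 : (1 : A) ∈ S) (hstab : s ⊆ S.leftMulStab) :
    S = ⊤ := by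
  rw [← Algebra.adjoin_le_iff, hs, top_le_iff] at hstab
  refine eq_top_iff'.mpr fun x ↦ ?_
  simpa using (hstab ▸ Algebra.mem_top : x ∈ S.leftMulStab) 1 h1

theorem Subalgebra.mem_center_of_commute_of_adjoin_eq_top {s : Set A}
    (hs : Algebra.adjoin R s = ⊤) {x : A} (h : ∀ g ∈ s, Commute x g) : x ∈ center R A :=
  Subalgebra.mem_center_iff.mpr fun g ↦ (Algebra.commute_of_mem_adjoin_of_forall_mem_commute
    (b := g) (hs ▸ Algebra.mem_top) h).eq.symm

theorem Subalgebra.commute_of_mem_center {c : A} (hc : c ∈ Subalgebra.center R A) (x : A) :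
    Commute c x :=
  (Subalgebra.mem_center_iff.mp hc x).symm

theorem LinearMap.injective_of_linearIndependent_comp {M N ι : Type*} [AddCommMonoid M]
    [AddCommMonoid N] [Module R M] [Module R N] {f : M →ₗ[R] N} {v : ι → M}
    (hv : Submodule.span R (Set.range v) = ⊤) (hfv : LinearIndependent R (f ∘ v)) :
    Function.Injective f := by
  rw [LinearIndependent, Finsupp.linearCombination_linear_comp, LinearMap.coe_comp] at hfv
  refine hfv.of_comp_right ?_
  rw [← LinearMap.range_eq_top, Finsupp.range_linearCombination, hv]

theorem commute_add_sq_left {a b : A} (ha : Commute (a * a) b) (hb : Commute (b * b) a) :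
    Commute ((a + b) ^ 2) a := by
  have h1 := ha.eq
  have h2 := hb.eq
  simp only [Commute, SemiconjBy, sq, add_mul, mul_add, ← mul_assoc] at h1 h2 ⊢
  rw [h1, h2]
  abel

end General

theorem MvPolynomial.linearIndependent_X_pow_mul_X_pow {R σ : Type*} [CommSemiring R]
    {i j : σ} (hij : i ≠ j) :
    LinearIndependent R fun pq : ℕ × ℕ ↦ (X i ^ pq.1 * X j ^ pq.2 : MvPolynomial σ R) := by
  have hinj :
      Function.Injective fun pq : ℕ × ℕ ↦ Finsupp.single i pq.1 + Finsupp.single j pq.2 := by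
    intro ⟨p, q⟩ ⟨p', q'⟩ h
    have hp : p = p' := by simpa [hij.symm] using DFunLike.congr_fun h i
    have hq : q = q' := by simpa [hij] using DFunLike.congr_fun h j
    rw [hp, hq]
  convert (MvPolynomial.basisMonomials σ R).linearIndependent.comp _ hinj with pq
  simp [X_pow_eq_monomial, monomial_mul]

namespace Bprime

open MvPolynomial Submodule
open Subalgebra (commute_of_mem_center)

theorem adjoin_aB_bB_zB : Algebra.adjoin ℂ {aB, bB, zB} = ⊤ := by
  have hgen : ({aB, bB, zB} : Set Bprime) =
      RingQuot.mkAlgHom ℂ BpRel '' Set.range (FreeAlgebra.ι ℂ) := by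
    ext x
    simp [aB, bB, zB, Fin.exists_fin_succ, eq_comm]
  rw [hgen, ← AlgHom.map_adjoin, FreeAlgebra.adjoin_range_ι, Algebra.map_top,
    AlgHom.range_eq_top]
  exact RingQuot.mkAlgHom_surjective ℂ BpRel

theorem aB_mul_self : aB * aB = (4 : ℂ)⁻¹ • (zB * zB) := by
  simpa [aB, zB] using RingQuot.mkAlgHom_rel ℂ BpRel.ha

theorem bB_mul_self : bB * bB = (4 : ℂ)⁻¹ • (zB * zB) := by
  simpa [bB, zB] using RingQuot.mkAlgHom_rel ℂ BpRel.hb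

theorem commute_zB_aB : Commute zB aB :=
  show zB * aB = aB * zB by simpa [aB, zB] using RingQuot.mkAlgHom_rel ℂ BpRel.hza

theorem commute_zB_bB : Commute zB bB :=
  show zB * bB = bB * zB by simpa [bB, zB] using RingQuot.mkAlgHom_rel ℂ BpRel.hzb

theorem mem_center_of_commute {x : Bprime} (ha : Commute x aB) (hb : Commute x bB)
    (hz : Commute x zB) : x ∈ Subalgebra.center ℂ Bprime :=
  Subalgebra.mem_center_of_commute_of_adjoin_eq_top adjoin_aB_bB_zB (by simp [ha, hb, hz])

theorem zB_mem_center : zB ∈ Subalgebra.center ℂ Bprime :=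
  mem_center_of_commute commute_zB_aB commute_zB_bB (Commute.refl zB)

theorem aB_mul_self_mem_center : aB * aB ∈ Subalgebra.center ℂ Bprime := by
  rw [aB_mul_self]
  exact Subalgebra.smul_mem _ (mul_mem zB_mem_center zB_mem_center) _

theorem bB_mul_self_eq_aB_mul_self : bB * bB = aB * aB := by rw [aB_mul_self, bB_mul_self]

noncomputable def tB : Bprime := (aB + bB) ^ 2

theorem tB_mem_center : tB ∈ Subalgebra.center ℂ Bprime := by
  have ha : Commute (aB * aB) bB := commute_of_mem_center aB_mul_self_mem_center bB
  have hb : Commute (bB * bB) aB :=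
    bB_mul_self_eq_aB_mul_self ▸ commute_of_mem_center aB_mul_self_mem_center aB
  refine mem_center_of_commute (commute_add_sq_left ha hb) ?_
    (commute_of_mem_center zB_mem_center _).symm
  rw [tB, add_comm]
  exact commute_add_sq_left hb ha

theorem bB_mul_aB : bB * aB = tB - (2 : ℂ)⁻¹ • zB ^ 2 - aB * bB := by
  have : tB = aB * aB + aB * bB + bB * aB + bB * bB := by rw [tB, sq]; noncomm_ring
  rw [this, aB_mul_self, bB_mul_self, sq]
  module

noncomputable def wB : Fin 4 → Bprime := ![1, aB, bB, aB * bB]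

theorem BprimeBasisFam_eq (p q : ℕ) (i : Fin 4) :
    BprimeBasisFam (p, q, i) = zB ^ p * tB ^ q * wB i := by
  rw [(commute_of_mem_center (mul_mem (pow_mem zB_mem_center p) (pow_mem tB_mem_center q)) _).eq,
    ← mul_assoc, tB, ← pow_mul]
  fin_cases i <;> simp [BprimeBasisFam, wB]

theorem mem_span_basisFam (p q : ℕ) (i : Fin 4) :
    zB ^ p * tB ^ q * wB i ∈ span ℂ (Set.range BprimeBasisFam) :=
  BprimeBasisFam_eq p q i ▸ Submodule.subset_span ⟨_, rfl⟩

theorem zB_mem_leftMulStab : zB ∈ (span ℂ (Set.range BprimeBasisFam)).leftMulStab :=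
  mem_leftMulStab_span fun ⟨p, q, i⟩ ↦ by
    rw [BprimeBasisFam_eq, ← mul_assoc, ← mul_assoc, ← pow_succ']
    exact mem_span_basisFam _ _ _

theorem tB_mem_leftMulStab : tB ∈ (span ℂ (Set.range BprimeBasisFam)).leftMulStab :=
  mem_leftMulStab_span fun ⟨p, q, i⟩ ↦ by
    rw [BprimeBasisFam_eq, ← mul_assoc, ← mul_assoc,
      (commute_of_mem_center tB_mem_center _).eq, mul_assoc _ tB, ← pow_succ']
    exact mem_span_basisFam _ _ _

theorem mem_leftMulStab_of_mul_wB_mem {g : Bprime}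
    (h : ∀ i, g * wB i ∈ span ℂ (Set.range BprimeBasisFam)) :
    g ∈ (span ℂ (Set.range BprimeBasisFam)).leftMulStab :=
  mem_leftMulStab_span fun ⟨p, q, i⟩ ↦ by
    have hc := mul_mem (pow_mem zB_mem_center p) (pow_mem tB_mem_center q)
    rw [BprimeBasisFam_eq, ← mul_assoc, ← (commute_of_mem_center hc g).eq, mul_assoc]
    exact mul_mem (pow_mem zB_mem_leftMulStab p) (pow_mem tB_mem_leftMulStab q) _ (h i)

theorem aB_mul_wB_mem (i : Fin 4) : aB * wB i ∈ span ℂ (Set.range BprimeBasisFam) := by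
  have h := mem_span_basisFam
  fin_cases i <;> simp only [wB, Fin.reduceFinMk, Matrix.cons_val]
  · simpa [wB] using h 0 0 1
  · rw [aB_mul_self, ← sq]; simpa [wB] using Submodule.smul_mem _ (4 : ℂ)⁻¹ (h 2 0 0)
  · simpa [wB] using h 0 0 3
  · rw [← mul_assoc, aB_mul_self, ← sq, smul_mul_assoc]
    simpa [wB] using Submodule.smul_mem _ (4 : ℂ)⁻¹ (h 2 0 2)

theorem bB_mul_wB_mem (i : Fin 4) : bB * wB i ∈ span ℂ (Set.range BprimeBasisFam) := by
  have h := mem_span_basisFam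
  fin_cases i <;> simp only [wB, Fin.reduceFinMk, Matrix.cons_val]
  · simpa [wB] using h 0 0 2
  · rw [bB_mul_aB]
    refine sub_mem (sub_mem ?_ (Submodule.smul_mem _ _ ?_)) ?_
    · simpa [wB] using h 0 1 0
    · simpa [wB] using h 2 0 0
    · simpa [wB] using h 0 0 3
  · rw [bB_mul_self, ← sq]; simpa [wB] using Submodule.smul_mem _ (4 : ℂ)⁻¹ (h 2 0 0)
  · rw [← mul_assoc, bB_mul_aB, sub_mul, sub_mul, mul_assoc aB, bB_mul_self, smul_mul_assoc,
      mul_smul_comm, ← sq, ← (commute_of_mem_center (pow_mem zB_mem_center 2) aB).eq]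
    refine sub_mem (sub_mem ?_ (Submodule.smul_mem _ _ ?_)) (Submodule.smul_mem _ _ ?_)
    · simpa [wB] using h 0 1 2
    · simpa [wB] using h 2 0 2
    · simpa [wB] using h 2 0 1

theorem span_basisFam_eq_top : span ℂ (Set.range BprimeBasisFam) = ⊤ := by
  refine Submodule.eq_top_of_subset_leftMulStab adjoin_aB_bB_zB
    (by simpa [wB] using mem_span_basisFam 0 0 0) ?_
  simp only [Set.insert_subset_iff, Set.singleton_subset_iff, SetLike.mem_coe]
  exact ⟨mem_leftMulStab_of_mul_wB_mem aB_mul_wB_mem, mem_leftMulStab_of_mul_wB_mem bB_mul_wB_mem,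
    zB_mem_leftMulStab⟩

-- `X 0` and `X 1` are the variables `x` and `y` of the representation.
abbrev R2 : Type := MvPolynomial (Fin 2) ℂ

noncomputable def repA : Matrix (Fin 2) (Fin 2) R2 := !![0, 1; X 0 ^ 2, 0]
noncomputable def repB : Matrix (Fin 2) (Fin 2) R2 := !![X 0, 0; X 1 - 2 * X 0 ^ 2, -X 0]
noncomputable def repZ : Matrix (Fin 2) (Fin 2) R2 := (2 * X 0 : R2) • 1

theorem repA_mul_self : repA * repA = (X 0 ^ 2 : R2) • 1 := by
  ext i j : 1; fin_cases i <;> fin_cases j <;> simp [repA]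

theorem repB_mul_self : repB * repB = repA * repA := by
  rw [repA_mul_self]
  ext i j : 1; fin_cases i <;> fin_cases j <;> simp [repB] <;> ring

theorem repA_mul_self_eq_inv_four_smul : repA * repA = (4 : ℂ)⁻¹ • (repZ * repZ) := by
  have h : (2 * X 0 : R2) * (2 * X 0) = (4 : ℂ) • X 0 ^ 2 := by
    rw [smul_eq_C_mul, map_ofNat]; ring
  rw [repZ, smul_mul_smul_comm, mul_one, h, smul_assoc, inv_smul_smul₀ (by norm_num),
    repA_mul_self]

theorem repA_add_repB_sq : (repA + repB) ^ 2 = (X 1 : R2) • 1 := by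
  ext i j : 1; fin_cases i <;> fin_cases j <;> simp [repA, repB, sq] <;> ring

noncomputable def rep : Bprime →ₐ[ℂ] Matrix (Fin 2) (Fin 2) R2 :=
  RingQuot.liftAlgHom ℂ ⟨FreeAlgebra.lift ℂ ![repA, repB, repZ], fun x y h ↦ by
    induction h <;> simp [repB_mul_self, repA_mul_self_eq_inv_four_smul, repZ]⟩

@[simp] theorem rep_aB : rep aB = repA := by simp [rep, aB, RingQuot.liftAlgHom_mkAlgHom_apply]
@[simp] theorem rep_bB : rep bB = repB := by simp [rep, bB, RingQuot.liftAlgHom_mkAlgHom_apply]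
@[simp] theorem rep_zB : rep zB = repZ := by simp [rep, zB, RingQuot.liftAlgHom_mkAlgHom_apply]

theorem rep_tB : rep tB = (X 1 : R2) • 1 := by
  rw [tB, map_pow, map_add, rep_aB, rep_bB, repA_add_repB_sq]

noncomputable def repW : Fin 4 → Matrix (Fin 2) (Fin 2) R2 := ![1, repA, repB, repA * repB]

theorem rep_basisFam (p q : ℕ) (i : Fin 4) :
    rep (BprimeBasisFam (p, q, i)) = ((2 * X 0) ^ p * X 1 ^ q : R2) • repW i := by
  have hw : rep (wB i) = repW i := by fin_cases i <;> simp [wB, repW]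
  rw [BprimeBasisFam_eq, map_mul, map_mul, map_pow, map_pow, rep_zB, rep_tB, hw, repZ,
    smul_pow, smul_pow, one_pow, one_pow, smul_mul_smul_comm, one_mul, smul_mul_assoc, one_mul]

theorem linearIndependent_repW : LinearIndependent R2 repW := by
  rw [Fintype.linearIndependent_iff]
  intro c hc
  have hE (i j : Fin 2) : (∑ k, c k • repW k) i j = 0 := by rw [hc]; rfl
  have E00 : c 0 + c 2 * X 0 + c 3 * (X 1 - 2 * X 0 ^ 2) = 0 := by
    simpa [Fin.sum_univ_four, repW, repA, repB] using hE 0 0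
  have E01 : c 1 - c 3 * X 0 = 0 := by
    simpa [Fin.sum_univ_four, repW, repA, repB, sub_eq_add_neg] using hE 0 1
  have E10 : c 1 * X 0 ^ 2 + c 2 * (X 1 - 2 * X 0 ^ 2) + c 3 * X 0 ^ 3 = 0 := by
    simpa [Fin.sum_univ_four, repW, repA, repB, pow_succ] using hE 1 0
  have E11 : c 0 - c 2 * X 0 = 0 := by
    simpa [Fin.sum_univ_four, repW, repA, repB, sub_eq_add_neg] using hE 1 1
  have hx : (X 0 : R2) ≠ 0 := X_ne_zero 0
  have hy : (X 1 * (X 1 - 4 * X 0 ^ 2) : R2) ≠ 0 := fun h ↦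
    absurd (congrArg (eval ![1, 1]) h) (by norm_num)
  have h3 : c 3 = 0 := by
    refine (mul_eq_zero.mp ?_).resolve_right hy
    linear_combination (X 1 - 2 * X 0 ^ 2) * (E00 - E11) - 2 * X 0 * (E10 - X 0 ^ 2 * E01)
  have h2 : c 2 = 0 := by
    refine (mul_eq_zero.mp ?_).resolve_right (mul_ne_zero two_ne_zero hx)
    linear_combination E00 - E11 - (X 1 - 2 * X 0 ^ 2) * h3
  have h1 : c 1 = 0 := by linear_combination E01 + X 0 * h3
  have h0 : c 0 = 0 := by linear_combination E11 + X 0 * h2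
  intro i
  fin_cases i <;> assumption

theorem linearIndependent_rep_basisFam :
    LinearIndependent ℂ (rep.toLinearMap ∘ BprimeBasisFam) := by
  have hmono :
      LinearIndependent ℂ fun pq : ℕ × ℕ ↦ ((2 * X 0) ^ pq.1 * X 1 ^ pq.2 : R2) := by
    have h := (linearIndependent_X_pow_mul_X_pow (R := ℂ) (Fin.zero_ne_one (n := 0))).units_smul
      fun pq ↦ Units.mk0 (2 : ℂ) two_ne_zero ^ pq.1
    have heq : ((fun pq : ℕ × ℕ ↦ Units.mk0 (2 : ℂ) two_ne_zero ^ pq.1) •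
        fun pq : ℕ × ℕ ↦ (X 0 ^ pq.1 * X 1 ^ pq.2 : R2)) =
        fun pq ↦ (2 * X 0) ^ pq.1 * X 1 ^ pq.2 := by
      funext pq
      simp [Units.smul_def, smul_eq_C_mul, mul_pow, mul_assoc, map_ofNat]
    exact heq ▸ h
  refine (linearIndependent_equiv' (Equiv.prodAssoc _ _ _).symm ?_).mpr
    (linearIndependent_smul hmono linearIndependent_repW)
  funext ⟨p, q, i⟩
  exact (rep_basisFam p q i).symm

theorem rep_injective : Function.Injective rep :=
  LinearMap.injective_of_linearIndependent_comp span_basisFam_eq_top linearIndependent_rep_basisFam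

theorem eq_smul_one_of_commute {m : Matrix (Fin 2) (Fin 2) R2} (hA : Commute m repA)
    (hB : Commute m repB) : m = m 0 0 • 1 := by
  have hA00 : m 0 1 * X 0 ^ 2 = m 1 0 := by
    simpa [repA, Matrix.mul_apply] using congrFun (congrFun hA.eq 0) 0
  have hA01 : m 0 0 = m 1 1 := by
    simpa [repA, Matrix.mul_apply] using congrFun (congrFun hA.eq 0) 1
  have hB00 : m 0 0 * X 0 + m 0 1 * (X 1 - 2 * X 0 ^ 2) = X 0 * m 0 0 := by
    simpa [repB, Matrix.mul_apply] using congrFun (congrFun hB.eq 0) 0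
  have hy : (X 1 - 2 * X 0 ^ 2 : R2) ≠ 0 := fun h ↦
    absurd (congrArg (eval ![1, 1]) h) (by norm_num)
  have h01 : m 0 1 = 0 :=
    (mul_eq_zero.mp (by linear_combination hB00)).resolve_right hy
  have h10 : m 1 0 = 0 := by rw [← hA00, h01, zero_mul]
  ext i j : 1
  fin_cases i <;> fin_cases j <;> simp [h01, h10, hA01]

theorem rep_mem_span_repW {s : Set (Fin 4)} {x : Bprime}
    (hx : x ∈ span ℂ (BprimeBasisFam '' ((·.2.2) ⁻¹' s))) :
    rep x ∈ span R2 (repW '' s) := by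
  induction hx using span_induction with
  | mem x hx =>
    obtain ⟨⟨p, q, i⟩, hi, rfl⟩ := hx
    rw [rep_basisFam]
    exact smul_mem _ _ (subset_span ⟨i, hi, rfl⟩)
  | zero => simp
  | add x y _ _ hx hy => rw [map_add]; exact add_mem hx hy
  | smul c x _ hx => rw [map_smul, ← algebraMap_smul R2]; exact smul_mem _ _ hx

theorem span_basisFam_eq_sup (s : Set (Fin 4)) :
    span ℂ (Set.range BprimeBasisFam) = span ℂ (BprimeBasisFam '' ((·.2.2) ⁻¹' s)) ⊔
      span ℂ (BprimeBasisFam '' ((·.2.2) ⁻¹' sᶜ)) := by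
  rw [← span_union, ← Set.image_union, ← Set.preimage_union, Set.union_compl_self,
    Set.preimage_univ, Set.image_univ]

theorem center_le_span_basisFam_zero :
    Subalgebra.toSubmodule (Subalgebra.center ℂ Bprime) ≤
      span ℂ (BprimeBasisFam '' ((·.2.2) ⁻¹' {0})) := by
  intro u hu
  have hu := (Subalgebra.mem_toSubmodule _).mp hu
  have hscalar : rep u ∈ span R2 (repW '' {0}) := by
    rw [Set.image_singleton, mem_span_singleton]
    refine ⟨rep u 0 0, (eq_smul_one_of_commute ?_ ?_).symm⟩
    · simpa using (Subalgebra.commute_of_mem_center hu aB).map rep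
    · simpa using (Subalgebra.commute_of_mem_center hu bB).map rep
  obtain ⟨c, hc, w, hw, rfl⟩ := mem_sup.mp
    (span_basisFam_eq_sup {0} ▸ span_basisFam_eq_top ▸ mem_top : u ∈ _)
  suffices rep w = 0 by rwa [rep_injective (this.trans (map_zero rep).symm), add_zero]
  refine disjoint_def.mp (linearIndependent_repW.disjoint_span_image disjoint_compl_right) _
    ?_ (rep_mem_span_repW hw)
  simpa using sub_mem hscalar (rep_mem_span_repW hc)

theorem image_basisFam_zero : BprimeBasisFam '' ((·.2.2) ⁻¹' {0}) =
    Set.range fun pq : ℕ × ℕ ↦ zB ^ pq.1 * (aB + bB) ^ (2 * pq.2) := by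
  ext x
  constructor
  · rintro ⟨⟨p, q, i⟩, rfl : i = 0, rfl⟩
    exact ⟨(p, q), by simp [BprimeBasisFam]⟩
  · rintro ⟨⟨p, q⟩, rfl⟩
    exact ⟨(p, q, 0), rfl, by simp [BprimeBasisFam]⟩

end Bprime

/-- the elements `z^p (a+b)^{2q}`, `a z^p (a+b)^{2q}`, `b z^p (a+b)^{2q}`,
`a b z^p (a+b)^{2q}` (`p, q ≥ 0`) form a basis of `B'`, and the center of `B'` is the
span of the elements `z^p (a+b)^{2q}`. -/
theorem Bprime_basis_and_center :
    LinearIndependent ℂ BprimeBasisFam ∧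
    Submodule.span ℂ (Set.range BprimeBasisFam) = ⊤ ∧
    Subalgebra.toSubmodule (Subalgebra.center ℂ Bprime)
      = Submodule.span ℂ (Set.range fun pq : ℕ × ℕ => zB ^ pq.1 * (aB + bB) ^ (2 * pq.2)) := by
  refine ⟨Bprime.linearIndependent_rep_basisFam.of_comp, Bprime.span_basisFam_eq_top,
    le_antisymm ?_ ?_⟩
  · exact Bprime.image_basisFam_zero ▸ Bprime.center_le_span_basisFam_zero
  · rw [Submodule.span_le]
    rintro _ ⟨⟨p, q⟩, rfl⟩
    show zB ^ p * (aB + bB) ^ (2 * q) ∈ Subalgebra.center ℂ Bprime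
    rw [pow_mul]
    exact mul_mem (pow_mem Bprime.zB_mem_center p) (pow_mem Bprime.tB_mem_center q)
end

section
/- In the algebra B with generators a, b, z subject to a² = b² = z²/4 and [z,a] = [z,b] = 0, for every odd s > 1 and every p ≥ s one has the identities a_s z^{p-s} = (1/4) b_{s-2} z^{p-s+2} + [a, b_{s-1} z^{p-s}] and b_s z^{p-s} = (1/4) a_{s-2} z^{p-s+2} + [b, a_{s-1} z^{p-s}], and for every even s > 0, (a_s - b_s) z^{p-s} = [a, b_{s-1} z^{p-s}]. -/
/-- Alternating word: `altWord x y s = x y x y ⋯` (length `s`). -/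
def altWord {B : Type*} [Ring B] : B → B → ℕ → B
  | _, _, 0 => 1
  | x, y, s + 1 => x * altWord y x s

/-!
An alternating word of even length ends in the letter it does not start with, so for odd `m`
we have `a_{m+2} = a b_m a` and `a_{m+1} - b_{m+1} = a b_m - b_m a`. The even identity is then
immediate since `z` is central, and in the odd one the commutator `[a, b_m a z^k]` differs from
`a b_m a z^k` by `b_m a z^k a = b_m a² z^k = ¼ b_m z^{k+2}`.
-/

section AltWord

variable {B : Type*} [Ring B]

theorem altWord_add_two (x y : B) (n : ℕ) : altWord x y (n + 2) = x * y * altWord x y n := by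
  simp only [altWord, mul_assoc]

theorem altWord_two_mul (x y : B) (n : ℕ) : altWord x y (2 * n) = (x * y) ^ n := by
  induction n with
  | zero => rw [Nat.mul_zero, pow_zero, altWord]
  | succ n ih => rw [Nat.mul_succ, altWord_add_two, ih, pow_succ']

theorem altWord_two_mul_add_one (x y : B) (n : ℕ) :
    altWord x y (2 * n + 1) = (x * y) ^ n * x := by
  rw [altWord, altWord_two_mul]
  exact (SemiconjBy.pow_right (mul_assoc x y x).symm n)

theorem altWord_succ_of_odd (x y : B) {m : ℕ} (hm : Odd m) :
    altWord x y (m + 1) = altWord x y m * y := by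
  obtain ⟨n, rfl⟩ := hm
  rw [show 2 * n + 1 + 1 = 2 * (n + 1) by ring, altWord_two_mul, altWord_two_mul_add_one,
    pow_succ, mul_assoc]

end AltWord

section Commutator

variable {R B : Type*} [CommSemiring R] [Ring B] [Algebra R B] {x y z : B}

theorem mul_mul_pow_mul_of_mul_self_eq_smul {r : R} (hx : x * x = r • (z * z))
    (hzx : Commute z x) (w : B) (k : ℕ) :
    w * x * z ^ k * x = r • (w * z ^ (k + 2)) := by
  calc w * x * z ^ k * x = w * (x * x) * z ^ k := by
        rw [mul_assoc _ (z ^ k), (hzx.pow_left k).eq]; noncomm_ring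
    _ = r • (w * z ^ (k + 2)) := by
        rw [hx, mul_smul_comm, smul_mul_assoc, mul_assoc, ← sq, ← pow_add, add_comm]

theorem altWord_mul_pow_eq_smul_add_commutator_of_odd {r : R} (hx : x * x = r • (z * z))
    (hzx : Commute z x) {s : ℕ} (hs : Odd s) (hs1 : 1 < s) (k : ℕ) :
    altWord x y s * z ^ k
      = r • (altWord y x (s - 2) * z ^ (k + 2))
        + (x * (altWord y x (s - 1) * z ^ k) - altWord y x (s - 1) * z ^ k * x) := by
  obtain ⟨m, rfl⟩ : ∃ m, s = m + 2 := ⟨s - 2, by omega⟩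
  have hm : Odd m := by simpa [Nat.odd_add_one] using hs
  have hword : altWord y x (m + 1) = altWord y x m * x := altWord_succ_of_odd y x hm
  simp only [Nat.add_sub_cancel, show m + 2 - 1 = m + 1 by omega]
  rw [hword, mul_mul_pow_mul_of_mul_self_eq_smul hx hzx, add_sub_cancel, altWord, hword,
    mul_assoc, mul_assoc]

theorem sub_altWord_mul_pow_eq_commutator_of_even (hzx : Commute z x) {s : ℕ} (hs : Even s)
    (hs0 : 0 < s) (k : ℕ) :
    (altWord x y s - altWord y x s) * z ^ k
      = x * (altWord y x (s - 1) * z ^ k) - altWord y x (s - 1) * z ^ k * x := by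
  obtain ⟨m, rfl⟩ : ∃ m, s = m + 1 := ⟨s - 1, by omega⟩
  have hm : Odd m := by simpa [Nat.even_add_one] using hs
  rw [Nat.add_sub_cancel, altWord, altWord_succ_of_odd y x hm, mul_assoc _ (z ^ k),
    (hzx.pow_left k).eq]
  noncomm_ring

end Commutator

/-- in any associative `ℂ`-algebra `B` with elements `a, b, z` satisfying
`a² = b² = z²/4` and `z` central, writing `a_s = aba⋯`, `b_s = bab⋯` (words of length
`s`), one has, for odd `s > 1` and `p ≥ s`,
`a_s z^{p-s} = (1/4) b_{s-2} z^{p-s+2} + [a, b_{s-1} z^{p-s}]` and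
`b_s z^{p-s} = (1/4) a_{s-2} z^{p-s+2} + [b, a_{s-1} z^{p-s}]`,
and for even `s > 0`, `(a_s - b_s) z^{p-s} = [a, b_{s-1} z^{p-s}]`. -/
theorem altWord_commutator_identities {B : Type*} [Ring B] [Algebra ℂ B]
    (a b z : B)
    (ha : a * a = (4 : ℂ)⁻¹ • (z * z)) (hb : b * b = (4 : ℂ)⁻¹ • (z * z))
    (hza : z * a = a * z) (hzb : z * b = b * z) :
    (∀ s p : ℕ, Odd s → 1 < s → s ≤ p →
      altWord a b s * z ^ (p - s)
        = (4 : ℂ)⁻¹ • (altWord b a (s - 2) * z ^ (p - s + 2))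
          + (a * (altWord b a (s - 1) * z ^ (p - s))
              - (altWord b a (s - 1) * z ^ (p - s)) * a)) ∧
    (∀ s p : ℕ, Odd s → 1 < s → s ≤ p →
      altWord b a s * z ^ (p - s)
        = (4 : ℂ)⁻¹ • (altWord a b (s - 2) * z ^ (p - s + 2))
          + (b * (altWord a b (s - 1) * z ^ (p - s))
              - (altWord a b (s - 1) * z ^ (p - s)) * b)) ∧
    (∀ s p : ℕ, Even s → 0 < s → s ≤ p →
      (altWord a b s - altWord b a s) * z ^ (p - s)
        = a * (altWord b a (s - 1) * z ^ (p - s))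
          - (altWord b a (s - 1) * z ^ (p - s)) * a) :=
  ⟨fun s p hs hs1 _ => altWord_mul_pow_eq_smul_add_commutator_of_odd ha hza hs hs1 (p - s),
    fun s p hs hs1 _ => altWord_mul_pow_eq_smul_add_commutator_of_odd hb hzb hs hs1 (p - s),
    fun s p hs hs0 _ => sub_altWord_mul_pow_eq_commutator_of_even hza hs hs0 (p - s)⟩
end

section
/- Let n be the negative nilpotent subalgebra of a simple Lie algebra of ADE type with simple root vectors F_i, and fix signs ε_i = ±1 coming from a 2-coloring of the Dynkin diagram (adjacent vertices get opposite signs). Then there exists a basis {F_α} of n indexed by positive roots, with F_{α_i} = F_i, such that [F_i, F_α] = ε_i F_{α + α_i} whenever α + α_i is a root, and [F_i, F_α] = 0 whenever α + α_i is neither a root nor zero. -/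
open Finset

/-- The symmetric Cartan bilinear form attached to a simply-laced graph `G`:
`B(v,w) = 2 ∑ᵢ vᵢ wᵢ - ∑_{i ~ j} vᵢ w_j`. -/
def cartanForm {r : ℕ} (G : SimpleGraph (Fin r)) [DecidableRel G.Adj]
    (v w : Fin r → ℚ) : ℚ :=
  2 * ∑ i, v i * w i - ∑ i, ∑ j, if G.Adj i j then v i * w j else 0

/-- A finite graph is an ADE Dynkin diagram iff it is connected and its Cartan form is
positive definite. -/
def IsADE {r : ℕ} (G : SimpleGraph (Fin r)) [DecidableRel G.Adj] : Prop :=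
  G.Connected ∧ ∀ v : Fin r → ℚ, v ≠ 0 → 0 < cartanForm G v v

/-- Coordinates of a nonnegative integer vector, viewed rationally. -/
def qcast {r : ℕ} (v : Fin r → ℕ) : Fin r → ℚ := fun i => (v i : ℚ)

/-- The height of a positive root written in the basis of simple roots. -/
def rootHeight {r : ℕ} (v : Fin r → ℕ) : ℕ := ∑ i, v i

/-!
Positive definiteness of the Cartan form `B` confines `⟨v, α_j⟩ = B(v, α_j)` (`cartanPairing`)
to `{-1, 0, 1, 2}` for a positive root `v`; `v + α_j` is a root iff `⟨v, α_j⟩ = -1`, and every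
non-simple root is `u + α_i` for some root `u`. Choosing one such decomposition per root defines
`F_v = ε_i ⁅F_i, F_u⁆` by induction on the height. A second induction on the height, driven by the
Serre relations and the sign rule `ε_i = -ε_j` for adjacent `i, j`, shows that `⁅F_i, F_u⁆ = ε_i F_{u + α_i}` for *every* decomposition, that
`⁅F_j, F_v⁆ = 0` when `v + α_j` is not a root, and that `⁅F_j, ⁅F_j, F_v⁆⁆ = 0` when it is.
So the span of the `F_v` is stable under each `ad F_i`, hence is all of `L`, and counting
dimensions makes the `F_v` a basis.
-/

section CartanForm

variable {r : ℕ} {G : SimpleGraph (Fin r)} [DecidableRel G.Adj]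

lemma cartanForm_add_left (u v w : Fin r → ℚ) :
    cartanForm G (u + v) w = cartanForm G u w + cartanForm G v w := by
  simp only [cartanForm, Pi.add_apply, add_mul, ite_add_zero, Finset.sum_add_distrib]
  ring

lemma cartanForm_comm (v w : Fin r → ℚ) : cartanForm G v w = cartanForm G w v := by
  simp only [cartanForm, mul_comm (v _)]
  rw [Finset.sum_comm]
  simp only [G.adj_comm]

lemma cartanForm_add_right (u v w : Fin r → ℚ) :
    cartanForm G u (v + w) = cartanForm G u v + cartanForm G u w := by
  rw [cartanForm_comm, cartanForm_add_left, cartanForm_comm v, cartanForm_comm w]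

lemma cartanForm_sub_left (u v w : Fin r → ℚ) :
    cartanForm G (u - v) w = cartanForm G u w - cartanForm G v w := by
  rw [eq_sub_iff_add_eq, ← cartanForm_add_left, sub_add_cancel]

lemma cartanForm_sub_right (u v w : Fin r → ℚ) :
    cartanForm G u (v - w) = cartanForm G u v - cartanForm G u w := by
  rw [cartanForm_comm, cartanForm_sub_left, cartanForm_comm v, cartanForm_comm w]

lemma cartanForm_self_nonneg (hpos : ∀ w : Fin r → ℚ, w ≠ 0 → 0 < cartanForm G w w)
    (w : Fin r → ℚ) : 0 ≤ cartanForm G w w := by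
  rcases eq_or_ne w 0 with rfl | hw
  · simp [cartanForm]
  · exact (hpos w hw).le

lemma qcast_add (u v : Fin r → ℕ) : qcast (u + v) = qcast u + qcast v := by
  funext i; simp [qcast]

lemma qcast_injective : Function.Injective (qcast : (Fin r → ℕ) → Fin r → ℚ) :=
  fun u v h => funext fun i => by simpa [qcast] using congrFun h i

lemma rootHeight_add (u v : Fin r → ℕ) : rootHeight (u + v) = rootHeight u + rootHeight v :=
  Finset.sum_add_distrib

lemma rootHeight_single (i : Fin r) : rootHeight (Pi.single i 1 : Fin r → ℕ) = 1 := by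
  simp [rootHeight]

lemma rootHeight_lt_add_single (v : Fin r → ℕ) (i : Fin r) :
    rootHeight v < rootHeight (v + Pi.single i 1) := by
  simp [rootHeight_add, rootHeight_single]

lemma rootHeight_eq_zero_iff {v : Fin r → ℕ} : rootHeight v = 0 ↔ v = 0 := by
  simp [rootHeight, Finset.sum_eq_zero_iff, funext_iff]

lemma single_one_injective : Function.Injective (fun i : Fin r => (Pi.single i 1 : Fin r → ℕ)) :=
  fun i j h => by simpa [Pi.single_apply, eq_comm] using congrFun h i

def cartanPairing (G : SimpleGraph (Fin r)) [DecidableRel G.Adj] (v : Fin r → ℕ) (j : Fin r) :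
    ℤ :=
  2 * v j - ∑ i, if G.Adj i j then (v i : ℤ) else 0

lemma cartanForm_eq_sum_mul_cartanPairing (u v : Fin r → ℕ) :
    cartanForm G (qcast u) (qcast v) = ∑ j, (v j : ℚ) * cartanPairing G u j := by
  simp only [cartanForm, cartanPairing, qcast, Int.cast_sub, Int.cast_mul, Int.cast_sum,
    apply_ite (Int.cast : ℤ → ℚ), Int.cast_natCast, Int.cast_ofNat, Int.cast_zero, mul_sub,
    Finset.sum_sub_distrib, Finset.mul_sum, mul_ite, mul_zero]
  rw [Finset.sum_comm (f := fun i j => if G.Adj i j then _ else _)]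
  congr 1
  · exact Finset.sum_congr rfl fun i _ => by ring
  · exact Finset.sum_congr rfl fun j _ => Finset.sum_congr rfl fun i _ => by
      split_ifs <;> ring

lemma cartanForm_single_right (v : Fin r → ℕ) (j : Fin r) :
    cartanForm G (qcast v) (qcast (Pi.single j 1)) = cartanPairing G v j := by
  simp [cartanForm_eq_sum_mul_cartanPairing, Pi.single_apply]

lemma cartanPairing_add (u v : Fin r → ℕ) (j : Fin r) :
    cartanPairing G (u + v) j = cartanPairing G u j + cartanPairing G v j := by
  simp only [cartanPairing, Pi.add_apply, Nat.cast_add, ite_add_zero, Finset.sum_add_distrib]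
  ring

lemma cartanPairing_single (i j : Fin r) :
    cartanPairing G (Pi.single i 1) j = if i = j then 2 else if G.Adj i j then -1 else 0 := by
  rw [cartanPairing, Finset.sum_eq_single i (fun k _ hk => by simp [hk]) (by simp)]
  by_cases hij : i = j
  · subst hij; simp
  · simp only [hij, if_false]
    split_ifs <;> simp [Pi.single_eq_of_ne' hij]

lemma cartanPairing_add_single (v : Fin r → ℕ) (i j : Fin r) :
    cartanPairing G (v + Pi.single i 1) j
      = cartanPairing G v j + if i = j then 2 else if G.Adj i j then -1 else 0 := by
  rw [cartanPairing_add, cartanPairing_single]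

lemma cartanPairing_single_self (i : Fin r) : cartanPairing G (Pi.single i 1) i = 2 := by
  simp [cartanPairing_single]

lemma cartanForm_add_single_self (v : Fin r → ℕ) (j : Fin r) :
    cartanForm G (qcast (v + Pi.single j 1)) (qcast (v + Pi.single j 1))
      = cartanForm G (qcast v) (qcast v) + 2 * cartanPairing G v j + 2 := by
  rw [qcast_add, cartanForm_add_left, cartanForm_add_right, cartanForm_add_right,
    cartanForm_comm (qcast (Pi.single j 1)) (qcast v), cartanForm_single_right,
    cartanForm_single_right, cartanPairing_single_self]
  push_cast
  ring

lemma cartanForm_sub_single_self (v : Fin r → ℕ) (j : Fin r) :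
    cartanForm G (qcast v - qcast (Pi.single j 1)) (qcast v - qcast (Pi.single j 1))
      = cartanForm G (qcast v) (qcast v) - 2 * cartanPairing G v j + 2 := by
  rw [cartanForm_sub_left, cartanForm_sub_right, cartanForm_sub_right,
    cartanForm_comm (qcast (Pi.single j 1)) (qcast v), cartanForm_single_right,
    cartanForm_single_right, cartanPairing_single_self]
  push_cast
  ring

def IsPosRoot (G : SimpleGraph (Fin r)) [DecidableRel G.Adj] (v : Fin r → ℕ) : Prop :=
  cartanForm G (qcast v) (qcast v) = 2

lemma isPosRoot_single (i : Fin r) : IsPosRoot G (Pi.single i 1) := by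
  rw [IsPosRoot, cartanForm_single_right, cartanPairing_single_self]
  norm_num

namespace IsPosRoot

variable {v u : Fin r → ℕ}

lemma ne_zero (hv : IsPosRoot G v) : v ≠ 0 := by
  rintro rfl
  simp [IsPosRoot, cartanForm, qcast] at hv

lemma add_single_ne_single (hu : IsPosRoot G u) (i k : Fin r) :
    u + Pi.single i 1 ≠ Pi.single k 1 := fun h => by
  have := congrArg rootHeight h
  rw [rootHeight_add, rootHeight_single, rootHeight_single, add_eq_right,
    rootHeight_eq_zero_iff] at this
  exact hu.ne_zero this

lemma isPosRoot_add_single_iff (hv : IsPosRoot G v) (j : Fin r) :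
    IsPosRoot G (v + Pi.single j 1) ↔ cartanPairing G v j = -1 := by
  rw [IsPosRoot, cartanForm_add_single_self, hv]
  constructor <;> intro h
  · exact_mod_cast (by linarith : (cartanPairing G v j : ℚ) = -1)
  · rw [h]; norm_num

lemma exists_eq_add_single_of_cartanPairing_eq_one (hv : IsPosRoot G v) {j : Fin r}
    (hj : cartanPairing G v j = 1) : ∃ u, IsPosRoot G u ∧ v = u + Pi.single j 1 := by
  have hvj : 1 ≤ v j := by
    have : (0 : ℤ) ≤ ∑ i, if G.Adj i j then (v i : ℤ) else 0 :=
      Finset.sum_nonneg fun i _ => by positivity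
    rw [cartanPairing] at hj
    omega
  obtain ⟨u, rfl⟩ : ∃ u, v = u + Pi.single j 1 := ⟨v - Pi.single j 1, by
    ext k
    rcases eq_or_ne k j with rfl | hk
    · simp only [Pi.add_apply, Pi.sub_apply, Pi.single_eq_same]; omega
    · simp [hk]⟩
  refine ⟨u, ?_, rfl⟩
  rw [cartanPairing_add_single, if_pos rfl] at hj
  rw [IsPosRoot, cartanForm_add_single_self] at hv
  have huj : (cartanPairing G u j : ℚ) = -1 := by exact_mod_cast (by omega : _ = (-1 : ℤ))
  rw [IsPosRoot]
  linarith

variable (hpos : ∀ w : Fin r → ℚ, w ≠ 0 → 0 < cartanForm G w w)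
include hpos

lemma neg_one_le_cartanPairing (hv : IsPosRoot G v) (j : Fin r) :
    -1 ≤ cartanPairing G v j := by
  have hne : qcast (v + Pi.single j 1) ≠ 0 := fun h => by
    simpa [qcast, Nat.cast_add_one_ne_zero] using congrFun h j
  have := hpos _ hne
  rw [cartanForm_add_single_self, hv] at this
  have hlt : (-2 : ℚ) < cartanPairing G v j := by linarith
  have : (-2 : ℤ) < cartanPairing G v j := by exact_mod_cast hlt
  omega

lemma cartanPairing_le_two (hv : IsPosRoot G v) (j : Fin r) : cartanPairing G v j ≤ 2 := by
  have := cartanForm_self_nonneg hpos (qcast v - qcast (Pi.single j 1))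
  rw [cartanForm_sub_single_self, hv] at this
  have hle : (cartanPairing G v j : ℚ) ≤ 2 := by linarith
  exact_mod_cast hle

lemma eq_single_of_cartanPairing_eq_two (hv : IsPosRoot G v) {j : Fin r}
    (hj : cartanPairing G v j = 2) : v = Pi.single j 1 := by
  have h0 := cartanForm_sub_single_self (G := G) v j
  rw [hv, hj] at h0
  norm_num at h0
  exact qcast_injective (sub_eq_zero.mp (by_contra fun hne => (hpos _ hne).ne' h0))

lemma exists_eq_add_single (hv : IsPosRoot G v) (hns : ∀ i, v ≠ Pi.single i 1) :
    ∃ i u, IsPosRoot G u ∧ v = u + Pi.single i 1 := by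
  obtain ⟨j, hvj, hj⟩ : ∃ j, 0 < v j ∧ 0 < cartanPairing G v j := by
    by_contra! h
    have hsum : ∑ j, (v j : ℚ) * cartanPairing G v j ≤ 0 :=
      Finset.sum_nonpos fun j _ => by
        rcases (v j).eq_zero_or_pos with h0 | h0
        · simp [h0]
        · exact mul_nonpos_of_nonneg_of_nonpos (by positivity) (by exact_mod_cast h j h0)
    rw [← cartanForm_eq_sum_mul_cartanPairing, hv] at hsum
    norm_num at hsum
  have hj₂ : cartanPairing G v j ≠ 2 := fun h =>
    hns j (eq_single_of_cartanPairing_eq_two hpos hv h)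
  have := cartanPairing_le_two hpos hv j
  exact ⟨j, exists_eq_add_single_of_cartanPairing_eq_one hv (by omega)⟩

end IsPosRoot

end CartanForm

section LieRing

variable {L : Type*} [LieRing L] {a b x y : L}

lemma lie_lie_comm_of_lie_eq_zero (h : ⁅a, b⁆ = 0) (x : L) : ⁅a, ⁅b, x⁆⁆ = ⁅b, ⁅a, x⁆⁆ := by
  rw [leibniz_lie, h, zero_lie, zero_add]

lemma lie_lie_lie_eq_zero_of_lie_eq_zero (hab : ⁅a, ⁅a, b⁆⁆ = 0) (hax : ⁅a, x⁆ = 0) :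
    ⁅a, ⁅a, ⁅b, x⁆⁆⁆ = 0 := by
  rw [leibniz_lie a b x, hax, lie_zero, add_zero, leibniz_lie, hab, hax, zero_lie, lie_zero,
    add_zero]

/-- The left side equals both `⁅⁅a, b⁆, ⁅a, y⁆⁆` and its negative. -/
lemma lie_lie_lie_eq_zero_of_lie_lie_eq_zero [IsAddTorsionFree L] (hab : ⁅a, ⁅a, b⁆⁆ = 0)
    (hay : ⁅a, ⁅a, y⁆⁆ = 0) (hby : ⁅b, y⁆ = 0) : ⁅a, ⁅b, ⁅a, y⁆⁆⁆ = 0 := by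
  have h₁ : ⁅a, ⁅b, ⁅a, y⁆⁆⁆ = ⁅⁅a, b⁆, ⁅a, y⁆⁆ := by
    rw [leibniz_lie a b, hay, lie_zero, add_zero]
  have h₂ : ⁅b, ⁅a, y⁆⁆ = -⁅⁅a, b⁆, y⁆ := by
    rw [leibniz_lie, hby, lie_zero, add_zero, ← lie_skew b a, neg_lie]
  have h₃ : ⁅a, ⁅b, ⁅a, y⁆⁆⁆ = -⁅⁅a, b⁆, ⁅a, y⁆⁆ := by
    rw [h₂, lie_neg, leibniz_lie a ⁅a, b⁆, hab, zero_lie, zero_add]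
  exact self_eq_neg.mp (h₃.trans (congrArg Neg.neg h₁.symm))

end LieRing

theorem Submodule.span_eq_top_of_lie_mem {R L : Type*} [CommRing R] [LieRing L]
    [LieAlgebra R L] {s t : Set L} (hs : LieSubalgebra.lieSpan R L s = ⊤)
    (hst : s ⊆ span R t) (hlie : ∀ x ∈ s, ∀ y ∈ t, ⁅x, y⁆ ∈ span R t) : span R t = ⊤ := by
  have ad_mem : ∀ x ∈ s, ∀ y ∈ span R t, ⁅x, y⁆ ∈ span R t := fun x hx y hy => by
    induction hy using span_induction with
    | mem y hy => exact hlie x hx y hy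
    | zero => simp
    | add y z _ _ hy hz => rw [lie_add]; exact add_mem hy hz
    | smul c y _ hy => rw [lie_smul]; exact smul_mem _ c hy
  have lie_mem : ∀ x, ∀ y ∈ span R t, ⁅x, y⁆ ∈ span R t := fun x => by
    have hx : x ∈ LieSubalgebra.lieSpan R L s := hs ▸ trivial
    induction hx using LieSubalgebra.lieSpan_induction with
    | mem x hx => exact ad_mem x hx
    | zero => simp
    | add x y _ _ hx hy => intro z hz; rw [add_lie]; exact add_mem (hx z hz) (hy z hz)
    | smul c x _ hx => intro z hz; rw [smul_lie]; exact smul_mem _ c (hx z hz)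
    | lie x y _ _ hx hy =>
      intro z hz; rw [lie_lie]; exact sub_mem (hx _ (hy z hz)) (hy _ (hx z hz))
  let S : LieSubalgebra R L := { span R t with lie_mem' := fun {x _} _ hy => lie_mem x _ hy }
  exact eq_top_iff.2 fun x _ => LieSubalgebra.lieSpan_le (K := S) |>.2 hst (hs ▸ trivial)

section RootVectors

variable {r : ℕ} {G : SimpleGraph (Fin r)} {K L : Type*} [CommRing K] [LieRing L]
  [LieAlgebra K L]

structure SatisfiesSerre (G : SimpleGraph (Fin r)) (F : Fin r → L) : Prop where
  lie_eq_zero_of_not_adj {i j : Fin r} : i ≠ j → ¬ G.Adj i j → ⁅F i, F j⁆ = 0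
  lie_lie_eq_zero_of_adj {i j : Fin r} : G.Adj i j → ⁅F i, ⁅F i, F j⁆⁆ = 0

structure IsSignColoring (G : SimpleGraph (Fin r)) (ε : Fin r → K) : Prop where
  mul_self (i : Fin r) : ε i * ε i = 1
  eq_neg_of_adj {i j : Fin r} : G.Adj i j → ε i = -ε j

lemma IsSignColoring.eq_smul_of_eq_smul {ε : Fin r → K} (hε : IsSignColoring G ε) {i : Fin r}
    {x y : L} (h : y = ε i • x) : x = ε i • y := by
  rw [h, smul_smul, hε.mul_self, one_smul]

variable [DecidableRel G.Adj]

structure IsRootChainFamily (G : SimpleGraph (Fin r)) [DecidableRel G.Adj] (F : Fin r → L)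
    (ε : Fin r → K) (Fc : (Fin r → ℕ) → L) : Prop where
  apply_single (i : Fin r) : Fc (Pi.single i 1) = F i
  exists_eq_smul_lie {v : Fin r → ℕ} : IsPosRoot G v → (∀ i, v ≠ Pi.single i 1) →
    ∃ i u, IsPosRoot G u ∧ v = u + Pi.single i 1 ∧ Fc v = ε i • ⁅F i, Fc u⁆

structure SatisfiesRootRelations (G : SimpleGraph (Fin r)) [DecidableRel G.Adj]
    (F : Fin r → L) (ε : Fin r → K) (Fc : (Fin r → ℕ) → L) (v : Fin r → ℕ) : Prop where
  lie_eq_smul {i : Fin r} {u : Fin r → ℕ} :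
    IsPosRoot G u → v = u + Pi.single i 1 → ⁅F i, Fc u⁆ = ε i • Fc v
  lie_lie_eq_zero {j : Fin r} : IsPosRoot G (v + Pi.single j 1) → ⁅F j, ⁅F j, Fc v⁆⁆ = 0
  lie_eq_zero {j : Fin r} : ¬ IsPosRoot G (v + Pi.single j 1) → ⁅F j, Fc v⁆ = 0

variable {F : Fin r → L} {ε : Fin r → K} {Fc : (Fin r → ℕ) → L}

lemma satisfiesRootRelations_single (hF : SatisfiesSerre G F)
    (hFc : ∀ i, Fc (Pi.single i 1) = F i) (k : Fin r) :
    SatisfiesRootRelations G F ε Fc (Pi.single k 1) where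
  lie_eq_smul hu hk := absurd hk.symm (hu.add_single_ne_single _ _)
  lie_lie_eq_zero {j} hj := by
    rw [(isPosRoot_single k).isPosRoot_add_single_iff, cartanPairing_single] at hj
    split_ifs at hj with hkj hadj
    rw [hFc]
    exact hF.lie_lie_eq_zero_of_adj hadj.symm
  lie_eq_zero {j} hj := by
    rw [(isPosRoot_single k).isPosRoot_add_single_iff, cartanPairing_single] at hj
    rw [hFc]
    rcases eq_or_ne j k with rfl | hjk
    · exact lie_self _
    · split_ifs at hj with hkj hadj
      · exact absurd hkj.symm hjk
      · exact absurd rfl hj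
      · exact hF.lie_eq_zero_of_not_adj hjk (fun h => hadj h.symm)

section ChainStep

variable (hpos : ∀ w : Fin r → ℚ, w ≠ 0 → 0 < cartanForm G w w) (hF : SatisfiesSerre G F)
  {v u₀ : Fin r → ℕ} {i₀ : Fin r} (hv : IsPosRoot G v) (hu₀ : IsPosRoot G u₀)
  (hvu₀ : v = u₀ + Pi.single i₀ 1) (hFcv : Fc v = ε i₀ • ⁅F i₀, Fc u₀⁆)
  (ih : ∀ w, IsPosRoot G w → rootHeight w < rootHeight v → SatisfiesRootRelations G F ε Fc w)
include hpos hF hv hu₀ hvu₀ hFcv ih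

lemma lie_eq_smul_of_eq_add_single (hε : IsSignColoring G ε)
    (hFc : ∀ i, Fc (Pi.single i 1) = F i) {i : Fin r} {u : Fin r → ℕ} (hu : IsPosRoot G u)
    (huv : v = u + Pi.single i 1) : ⁅F i, Fc u⁆ = ε i • Fc v := by
  rcases eq_or_ne i i₀ with rfl | hi
  · obtain rfl : u = u₀ := add_right_cancel (huv.symm.trans hvu₀)
    exact hε.eq_smul_of_eq_smul hFcv
  have hvi₀ : cartanPairing G v i₀ = 1 := by
    have := (hu₀.isPosRoot_add_single_iff i₀).1 (hvu₀ ▸ hv)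
    rw [hvu₀, cartanPairing_add, cartanPairing_single_self]; omega
  rw [huv, cartanPairing_add_single, if_neg hi] at hvi₀
  by_cases hadj : G.Adj i i₀
  · rw [if_pos hadj] at hvi₀
    obtain rfl := hu.eq_single_of_cartanPairing_eq_two hpos (j := i₀) (by omega : _ = (2 : ℤ))
    obtain rfl : u₀ = Pi.single i 1 :=
      add_right_cancel (hvu₀.symm.trans (huv.trans (add_comm _ _)))
    rw [hFcv, hFc, hFc, hε.eq_neg_of_adj hadj, neg_smul, smul_smul, hε.mul_self, one_smul,
      lie_skew]
  · rw [if_neg hadj] at hvi₀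
    obtain ⟨x, hx, hux⟩ :=
      hu.exists_eq_add_single_of_cartanPairing_eq_one (j := i₀) (by omega : _ = (1 : ℤ))
    have hu₀x : u₀ = x + Pi.single i 1 := add_right_cancel (hvu₀.symm.trans (by
      rw [huv, hux, add_right_comm]))
    have hFcu := hε.eq_smul_of_eq_smul
      ((ih u hu (huv ▸ rootHeight_lt_add_single u i)).lie_eq_smul hx hux)
    have hFcu₀ := (ih u₀ hu₀ (hvu₀ ▸ rootHeight_lt_add_single u₀ i₀)).lie_eq_smul hx hu₀x
    calc ⁅F i, Fc u⁆ = ε i₀ • ⁅F i₀, ⁅F i, Fc x⁆⁆ := by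
          rw [hFcu, lie_smul, lie_lie_comm_of_lie_eq_zero (hF.lie_eq_zero_of_not_adj hi hadj)]
      _ = ε i • Fc v := by rw [hFcu₀, lie_smul, smul_comm, hFcv]

lemma lie_lie_eq_zero_of_isPosRoot_add_single {j : Fin r}
    (hj : IsPosRoot G (v + Pi.single j 1)) : ⁅F j, ⁅F j, Fc v⁆⁆ = 0 := by
  have hvj := (hv.isPosRoot_add_single_iff j).1 hj
  rw [hvu₀, cartanPairing_add_single] at hvj
  have hu₀j := hu₀.neg_one_le_cartanPairing hpos j
  have hi₀j : i₀ ≠ j := by rintro rfl; rw [if_pos rfl] at hvj; omega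
  have ihu₀ := ih u₀ hu₀ (hvu₀ ▸ rootHeight_lt_add_single u₀ i₀)
  rw [if_neg hi₀j] at hvj
  rw [hFcv, lie_smul, lie_smul]
  by_cases hadj : G.Adj j i₀
  · rw [if_pos hadj.symm] at hvj
    have hz : ⁅F j, Fc u₀⁆ = 0 :=
      ihu₀.lie_eq_zero (by rw [hu₀.isPosRoot_add_single_iff]; omega)
    rw [lie_lie_lie_eq_zero_of_lie_eq_zero (hF.lie_lie_eq_zero_of_adj hadj) hz, smul_zero]
  · rw [if_neg (fun h => hadj h.symm)] at hvj
    have hcomm := lie_lie_comm_of_lie_eq_zero (hF.lie_eq_zero_of_not_adj hi₀j.symm hadj)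
    rw [hcomm, hcomm, ihu₀.lie_lie_eq_zero (by rw [hu₀.isPosRoot_add_single_iff]; omega),
      lie_zero, smul_zero]

lemma lie_eq_zero_of_not_isPosRoot_add_single [IsAddTorsionFree L] (hε : IsSignColoring G ε)
    (hFc : ∀ i, Fc (Pi.single i 1) = F i) {j : Fin r}
    (hj : ¬ IsPosRoot G (v + Pi.single j 1)) : ⁅F j, Fc v⁆ = 0 := by
  have ihu₀ := ih u₀ hu₀ (hvu₀ ▸ rootHeight_lt_add_single u₀ i₀)
  rcases eq_or_ne j i₀ with rfl | hji₀
  · rw [hFcv, lie_smul, ihu₀.lie_lie_eq_zero (hvu₀ ▸ hv), smul_zero]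
  have hvj : cartanPairing G v j ≠ -1 := fun h => hj ((hv.isPosRoot_add_single_iff j).2 h)
  have hvj₂ : cartanPairing G v j ≠ 2 := fun h =>
    hu₀.add_single_ne_single i₀ j (hvu₀ ▸ hv.eq_single_of_cartanPairing_eq_two hpos h)
  have hu₀i₀ := (hu₀.isPosRoot_add_single_iff i₀).1 (hvu₀ ▸ hv)
  have hle := hv.neg_one_le_cartanPairing hpos j
  have hge := hv.cartanPairing_le_two hpos j
  rw [hvu₀, cartanPairing_add_single, if_neg hji₀.symm] at hvj hvj₂ hle hge
  rw [hFcv, lie_smul]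
  by_cases hadj : G.Adj j i₀
  · rw [if_pos hadj.symm] at hvj hvj₂ hle hge
    rcases (by omega : cartanPairing G u₀ j = 2 ∨ cartanPairing G u₀ j = 1) with h₂ | h₁
    · obtain rfl := hu₀.eq_single_of_cartanPairing_eq_two hpos h₂
      rw [hFc, ← lie_skew (F i₀), lie_neg, hF.lie_lie_eq_zero_of_adj hadj, neg_zero, smul_zero]
    obtain ⟨y, hy, hu₀y⟩ := hu₀.exists_eq_add_single_of_cartanPairing_eq_one h₁
    have ihy := ih y hy (by
      rw [hvu₀, hu₀y]
      exact (rootHeight_lt_add_single y j).trans (rootHeight_lt_add_single _ i₀))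
    have hyi₀ : cartanPairing G y i₀ = 0 := by
      rw [hu₀y, cartanPairing_add_single, if_neg hji₀, if_pos hadj] at hu₀i₀; omega
    have hby : ⁅F i₀, Fc y⁆ = 0 :=
      ihy.lie_eq_zero (by rw [hy.isPosRoot_add_single_iff]; omega)
    rw [hε.eq_smul_of_eq_smul (ihu₀.lie_eq_smul hy hu₀y), lie_smul, lie_smul,
      lie_lie_lie_eq_zero_of_lie_lie_eq_zero (hF.lie_lie_eq_zero_of_adj hadj)
        (ihy.lie_lie_eq_zero (hu₀y ▸ hu₀)) hby, smul_zero, smul_zero]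
  · rw [if_neg (fun h => hadj h.symm)] at hvj
    rw [lie_lie_comm_of_lie_eq_zero (hF.lie_eq_zero_of_not_adj hji₀ hadj),
      ihu₀.lie_eq_zero (by rw [hu₀.isPosRoot_add_single_iff]; omega), lie_zero, smul_zero]

end ChainStep

theorem IsRootChainFamily.satisfiesRootRelations [IsAddTorsionFree L]
    (hpos : ∀ w : Fin r → ℚ, w ≠ 0 → 0 < cartanForm G w w) (hF : SatisfiesSerre G F)
    (hε : IsSignColoring G ε) (hFc : IsRootChainFamily G F ε Fc) {v : Fin r → ℕ}
    (hv : IsPosRoot G v) : SatisfiesRootRelations G F ε Fc v := by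
  induction hn : rootHeight v using Nat.strong_induction_on generalizing v with
  | _ n ih =>
  by_cases hs : ∃ k, v = Pi.single k 1
  · obtain ⟨k, rfl⟩ := hs
    exact satisfiesRootRelations_single hF hFc.apply_single k
  obtain ⟨i₀, u₀, hu₀, hvu₀, hFcv⟩ := hFc.exists_eq_smul_lie hv (not_exists.mp hs)
  have ih' (w : Fin r → ℕ) (hw : IsPosRoot G w) (hlt : rootHeight w < rootHeight v) :
      SatisfiesRootRelations G F ε Fc w := ih _ (hn ▸ hlt) hw rfl
  exact ⟨lie_eq_smul_of_eq_add_single hpos hF hv hu₀ hvu₀ hFcv ih' hε hFc.apply_single,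
    lie_lie_eq_zero_of_isPosRoot_add_single hpos hF hv hu₀ hvu₀ hFcv ih',
    lie_eq_zero_of_not_isPosRoot_add_single hpos hF hv hu₀ hvu₀ hFcv ih' hε hFc.apply_single⟩

open Classical in
noncomputable def rootVector (G : SimpleGraph (Fin r)) [DecidableRel G.Adj] (F : Fin r → L)
    (ε : Fin r → K) (v : Fin r → ℕ) : L :=
  if h : ∃ p : Fin r × (Fin r → ℕ), IsPosRoot G p.2 ∧ v = p.2 + Pi.single p.1 1 then
    ε h.choose.1 • ⁅F h.choose.1, rootVector G F ε h.choose.2⁆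
  else if h' : ∃ i, v = Pi.single i 1 then F h'.choose else 0
termination_by rootHeight v
decreasing_by
  exact (rootHeight_lt_add_single _ _).trans_eq (congrArg rootHeight h.choose_spec.2).symm

theorem isRootChainFamily_rootVector (hpos : ∀ w : Fin r → ℚ, w ≠ 0 → 0 < cartanForm G w w) :
    IsRootChainFamily G F ε (rootVector G F ε) where
  apply_single i := by
    have h : ¬ ∃ p : Fin r × (Fin r → ℕ),
        IsPosRoot G p.2 ∧ Pi.single i 1 = p.2 + Pi.single p.1 1 :=
      fun ⟨p, hp, he⟩ => hp.add_single_ne_single p.1 i he.symm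
    have h' : ∃ k, (Pi.single i 1 : Fin r → ℕ) = Pi.single k 1 := ⟨i, rfl⟩
    rw [rootVector, dif_neg h, dif_pos h', ← single_one_injective h'.choose_spec]
  exists_eq_smul_lie {v} hv hns := by
    obtain ⟨i, u, hu, hvu⟩ := hv.exists_eq_add_single hpos hns
    have h : ∃ p : Fin r × (Fin r → ℕ), IsPosRoot G p.2 ∧ v = p.2 + Pi.single p.1 1 :=
      ⟨(i, u), hu, hvu⟩
    exact ⟨_, _, h.choose_spec.1, h.choose_spec.2, by rw [rootVector, dif_pos h]⟩

end RootVectors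

theorem chevalley_basis_with_signs_general (r : ℕ)
    (G : SimpleGraph (Fin r)) [DecidableRel G.Adj] (hG : IsADE G)
    (Φ : Finset (Fin r → ℕ))
    (hΦ : ∀ v : Fin r → ℕ, v ∈ Φ ↔ cartanForm G (qcast v) (qcast v) = 2)
    (ε : Fin r → ℂ) (hε1 : ∀ i, ε i = 1 ∨ ε i = -1)
    (hε2 : ∀ i j, G.Adj i j → ε i = -ε j)
    (L : Type*) [LieRing L] [LieAlgebra ℂ L]
    (F : Fin r → L)
    (hgen : LieSubalgebra.lieSpan ℂ L (Set.range F) = ⊤)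
    (hserre1 : ∀ i j, i ≠ j → ¬G.Adj i j → ⁅F i, F j⁆ = 0)
    (hserre2 : ∀ i j, G.Adj i j → ⁅F i, ⁅F i, F j⁆⁆ = 0)
    (hdim : Module.finrank ℂ L = Φ.card) :
    ∃ Fc : (Fin r → ℕ) → L,
      (∀ i, Fc (Pi.single i 1) = F i) ∧
      LinearIndependent ℂ (fun v : {v // v ∈ Φ} => Fc v) ∧
      Submodule.span ℂ (Fc '' ↑Φ) = ⊤ ∧
      (∀ v ∈ Φ, ∀ i,
        (v + Pi.single i 1 ∈ Φ → ⁅F i, Fc v⁆ = ε i • Fc (v + Pi.single i 1)) ∧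
        (v + Pi.single i 1 ∉ Φ → ⁅F i, Fc v⁆ = 0)) := by
  obtain ⟨-, hpos⟩ := hG
  have hF : SatisfiesSerre G F := ⟨hserre1 _ _, hserre2 _ _⟩
  have hε : IsSignColoring G ε := ⟨fun i => by rcases hε1 i with h | h <;> simp [h], hε2 _ _⟩
  have : IsAddTorsionFree L := .of_isTorsionFree ℂ L
  obtain ⟨Fc, hFc⟩ : ∃ Fc, IsRootChainFamily G F ε Fc := ⟨_, isRootChainFamily_rootVector hpos⟩
  have hrel (v : Fin r → ℕ) (hv : v ∈ Φ) := hFc.satisfiesRootRelations hpos hF hε ((hΦ v).1 hv)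
  have hlie (v : Fin r → ℕ) (hv : v ∈ Φ) (i : Fin r) :
      (v + Pi.single i 1 ∈ Φ → ⁅F i, Fc v⁆ = ε i • Fc (v + Pi.single i 1)) ∧
      (v + Pi.single i 1 ∉ Φ → ⁅F i, Fc v⁆ = 0) :=
    ⟨fun h => (hrel _ h).lie_eq_smul ((hΦ v).1 hv) rfl,
      fun h => (hrel v hv).lie_eq_zero (mt (hΦ _).2 h)⟩
  have hspan : Submodule.span ℂ (Fc '' Φ) = ⊤ := by
    refine Submodule.span_eq_top_of_lie_mem hgen ?_ ?_
    · rintro _ ⟨i, rfl⟩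
      exact Submodule.subset_span ⟨_, (hΦ _).2 (isPosRoot_single i), hFc.apply_single i⟩
    · rintro _ ⟨i, rfl⟩ _ ⟨v, hv, rfl⟩
      by_cases h : v + Pi.single i 1 ∈ Φ
      · rw [(hlie v hv i).1 h]
        exact Submodule.smul_mem _ _ (Submodule.subset_span ⟨_, h, rfl⟩)
      · rw [(hlie v hv i).2 h]
        exact Submodule.zero_mem _
  refine ⟨Fc, hFc.apply_single, linearIndependent_of_top_le_span_of_card_eq_finrank ?_ ?_,
    hspan, hlie⟩
  · simpa [Set.image_eq_range] using hspan.ge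
  · rw [Fintype.card_coe, hdim]

/-- let `n` be the (negative) maximal nilpotent subalgebra of the simple
Lie algebra attached to an ADE diagram — presented as a Lie algebra `L` generated by
elements `F i` subject to the Serre relations, of dimension the number `N` of positive
roots — and fix signs `ε i = ±1` from a 2-coloring of the diagram (adjacent vertices get
opposite signs).  Then there is a basis `{F_α}` of `L` indexed by the positive roots
`α` (nonnegative vectors of squared length 2), with `F_{α_i} = F i`, such that
`[F i, F_α] = ε i • F_{α + α_i}` whenever `α + α_i` is a root, and `[F i, F_α] = 0`
whenever `α + α_i` is not a root (it is never zero). -/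
theorem chevalley_basis_with_signs (r : ℕ) (hr : 1 ≤ r)
    (G : SimpleGraph (Fin r)) [DecidableRel G.Adj] (hG : IsADE G)
    (Φ : Finset (Fin r → ℕ))
    (hΦ : ∀ v : Fin r → ℕ, v ∈ Φ ↔ cartanForm G (qcast v) (qcast v) = 2)
    (ε : Fin r → ℂ) (hε1 : ∀ i, ε i = 1 ∨ ε i = -1)
    (hε2 : ∀ i j, G.Adj i j → ε i = -ε j)
    (L : Type*) [LieRing L] [LieAlgebra ℂ L]
    (F : Fin r → L)
    (hgen : LieSubalgebra.lieSpan ℂ L (Set.range F) = ⊤)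
    (hserre1 : ∀ i j, i ≠ j → ¬G.Adj i j → ⁅F i, F j⁆ = 0)
    (hserre2 : ∀ i j, G.Adj i j → ⁅F i, ⁅F i, F j⁆⁆ = 0)
    (hdim : Module.finrank ℂ L = Φ.card) :
    ∃ Fc : (Fin r → ℕ) → L,
      (∀ i, Fc (Pi.single i 1) = F i) ∧
      LinearIndependent ℂ (fun v : {v // v ∈ Φ} => Fc v) ∧
      Submodule.span ℂ (Fc '' ↑Φ) = ⊤ ∧
      (∀ v ∈ Φ, ∀ i,
        (v + Pi.single i 1 ∈ Φ → ⁅F i, Fc v⁆ = ε i • Fc (v + Pi.single i 1)) ∧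
        (v + Pi.single i 1 ∉ Φ → ⁅F i, Fc v⁆ = 0)) :=
  chevalley_basis_with_signs_general r G hG Φ hΦ ε hε1 hε2 L F hgen hserre1 hserre2 hdim
end

section
/- Let g be a simple Lie algebra of ADE type with Cartan subalgebra h, F = Σ_i ε_i F_i a principal nilpotent element in n_-, and μ, λ ∈ h* with μ regular. Then for generic λ, the operator L = ad(-h_λ + F) ∘ ad(h_μ)^{-1} on n_- is diagonalizable with eigenvalues -(λ,α)/(μ,α), where α runs over the positive roots. -/
/-! In the basis of root vectors `F_α`, graded by height, `L` is triangular: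
`L F_α = c_α F_α + (terms of greater height)` with `c_α = -(λ,α)/(μ,α)`, because `[F, F_α]` is a
combination of the `F_{α+α_i}`. Hence each `c_α` is an eigenvalue (the matrix of `L - c_α` is block
triangular with a zero row in the block of height `ht α`). Genericity makes the `c_α` pairwise
distinct, so eigenvectors for them are linearly independent, and there are `dim n₋` of them. -/

open Finset

/-- The weight `ν` is given by its coordinates `ν i = (ν, α_i)` and the root by
`α = ∑ v i • α_i`. -/
noncomputable def wpair {r : ℕ} (ν : Fin r → ℂ) (v : Fin r → ℕ) : ℂ := ∑ i, ν i * (v i : ℂ)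

open Module Matrix

namespace Module.End

variable {K V ι α : Type*} [Field K] [AddCommGroup V] [Module K V]

def IsTriangular [LT α] (b : Basis ι K V) (h : ι → α) (f : End K V) (c : ι → K) : Prop :=
  ∀ i, f (b i) - c i • b i ∈ Submodule.span K (b '' {j | h i < h j})

variable [Fintype ι] [DecidableEq ι] {b : Basis ι K V} {h : ι → α} {f : End K V} {c : ι → K}

theorem IsTriangular.toMatrix_apply [LT α] (hf : IsTriangular b h f c) {j k : ι}
    (hjk : ¬ h k < h j) : LinearMap.toMatrix b b f j k = diagonal c j k := by
  have hrepr : b.repr (f (b k) - c k • b k) j = 0 :=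
    Finsupp.notMem_support_iff.1 fun hj => hjk (b.mem_span_image.1 (hf k) hj)
  rw [map_sub, map_smul, Finsupp.sub_apply, Finsupp.smul_apply, b.repr_self, sub_eq_zero] at hrepr
  rw [LinearMap.toMatrix_apply, hrepr, diagonal_apply, Finsupp.single_apply]
  by_cases hjk_eq : j = k
  · subst hjk_eq
    simp
  · simp [hjk_eq, Ne.symm hjk_eq]

theorem IsTriangular.hasEigenvalue [LinearOrder α] (hf : IsTriangular b h f c) (i : ι) :
    f.HasEigenvalue (c i) := by
  have := Module.Finite.of_basis b
  set M := LinearMap.toMatrix b b (f - c i • 1)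
  have hM : ∀ j k, ¬ h k < h j → M j k = diagonal (fun k => c k - c i) j k := by
    intro j k hjk
    simp only [M, map_sub, map_smul, LinearMap.toMatrix_one, smul_one_eq_diagonal]
    rw [Matrix.sub_apply, hf.toMatrix_apply hjk, ← Matrix.sub_apply, diagonal_sub]
  have hblock : M.BlockTriangular (OrderDual.toDual ∘ h) := fun j k hjk => by
    rw [hM j k hjk.not_gt, diagonal_apply_ne]
    rintro rfl
    exact lt_irrefl _ hjk
  have hdet : M.det = 0 := by
    rw [hblock.det]
    refine Finset.prod_eq_zero (Finset.mem_image_of_mem _ (Finset.mem_univ i)) ?_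
    refine det_eq_zero_of_row_eq_zero ⟨i, rfl⟩ fun k => ?_
    rw [toSquareBlock_def, of_apply, hM _ _ (show h k = h i from k.2).not_lt]
    by_cases hk : i = k <;> simp [hk]
  rw [hasEigenvalue_iff, eigenspace_def, ← LinearMap.det_eq_zero_iff_ker_ne_bot,
    ← LinearMap.det_toMatrix b]
  exact hdet

theorem IsTriangular.exists_basis_eigenvectors [LinearOrder α] (hf : IsTriangular b h f c)
    (hc : Function.Injective c) : ∃ e : Basis ι K V, ∀ i, f (e i) = c i • e i := by
  have := Module.Finite.of_basis b
  choose e he using fun i => (hf.hasEigenvalue i).exists_hasEigenvector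
  refine ⟨basisOfLinearIndependentOfCardEqFinrank' e (f.eigenvectors_linearIndependent' c hc e he)
    (finrank_eq_card_basis b).symm, fun i => ?_⟩
  simpa using (he i).apply_eq_smul

end Module.End

lemma rootHeight_add_single {r : ℕ} (v : Fin r → ℕ) (i : Fin r) :
    rootHeight (v + Pi.single i 1) = rootHeight v + 1 := by
  simp [rootHeight, Finset.sum_add_distrib]

theorem lie_sum_smul_mem_span_rootHeight_gt {R L : Type*} [CommRing R] [LieRing L]
    [LieAlgebra R L] {r : ℕ} {Φ : Finset (Fin r → ℕ)} {ε : Fin r → R} {F : Fin r → L}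
    {Fc : (Fin r → ℕ) → L}
    (hbr : ∀ v ∈ Φ, ∀ i,
      (v + Pi.single i 1 ∈ Φ → ⁅F i, Fc v⁆ = ε i • Fc (v + Pi.single i 1)) ∧
      (v + Pi.single i 1 ∉ Φ → ⁅F i, Fc v⁆ = 0))
    {v : Fin r → ℕ} (hv : v ∈ Φ) :
    ⁅∑ i, ε i • F i, Fc v⁆ ∈
      Submodule.span R ((fun w : Φ => Fc w) '' {w | rootHeight v < rootHeight w.1}) := by
  rw [sum_lie]
  refine Submodule.sum_mem _ fun i _ => ?_
  rw [smul_lie]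
  refine Submodule.smul_mem _ _ ?_
  by_cases hvi : v + Pi.single i 1 ∈ Φ
  · rw [(hbr v hv i).1 hvi]
    refine Submodule.smul_mem _ _ (Submodule.subset_span ⟨⟨_, hvi⟩, ?_, rfl⟩)
    simp [rootHeight_add_single]
  · rw [(hbr v hv i).2 hvi]
    exact Submodule.zero_mem _

theorem principal_operator_diagonalizable_general (r : ℕ)
    (Φ : Finset (Fin r → ℕ))
    (ε : Fin r → ℂ)
    (L : Type*) [LieRing L] [LieAlgebra ℂ L]
    (F : Fin r → L) (Fc : (Fin r → ℕ) → L)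
    (hind : LinearIndependent ℂ (fun v : {v // v ∈ Φ} => Fc v))
    (hspan : Submodule.span ℂ (Fc '' ↑Φ) = ⊤)
    (hbr : ∀ v ∈ Φ, ∀ i,
      (v + Pi.single i 1 ∈ Φ → ⁅F i, Fc v⁆ = ε i • Fc (v + Pi.single i 1)) ∧
      (v + Pi.single i 1 ∉ Φ → ⁅F i, Fc v⁆ = 0))
    (lam mu : Fin r → ℂ)
    (hgeneric : ∀ v ∈ Φ, ∀ w ∈ Φ,
      -(wpair lam v) / wpair mu v = -(wpair lam w) / wpair mu w → v = w)
    (Lop : Module.End ℂ L)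
    (hLop : ∀ v ∈ Φ, Lop (Fc v)
      = (-(wpair mu v))⁻¹ • ((wpair lam v) • Fc v + ⁅∑ i, ε i • F i, Fc v⁆)) :
    ∃ vec : (Fin r → ℕ) → L,
      LinearIndependent ℂ (fun v : {v // v ∈ Φ} => vec v) ∧
      Submodule.span ℂ (vec '' ↑Φ) = ⊤ ∧
      ∀ v ∈ Φ, vec v ≠ 0 ∧
        Lop (vec v) = (-(wpair lam v) / wpair mu v) • vec v := by
  let B : Basis Φ ℂ L := Basis.mk hind (by rw [← hspan, Set.image_eq_range]; rfl)
  have hB : End.IsTriangular B (fun v => rootHeight v.1) Lop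
      (fun v => -(wpair lam v) / wpair mu v) := by
    intro v
    have hLop' : Lop (Fc v) - (-(wpair lam v) / wpair mu v) • Fc v
        = (-(wpair mu v))⁻¹ • ⁅∑ i, ε i • F i, Fc v⁆ := by
      rw [hLop v v.2]
      module
    rw [Basis.coe_mk, hLop']
    exact Submodule.smul_mem _ _ (lie_sum_smul_mem_span_rootHeight_gt hbr v.2)
  obtain ⟨e, he⟩ := hB.exists_basis_eigenvectors
    fun v w hvw => Subtype.ext (hgeneric v v.2 w w.2 hvw)
  refine ⟨fun v => if hv : v ∈ Φ then e ⟨v, hv⟩ else 0, ?_, ?_, fun v hv => ?_⟩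
  · simp [e.linearIndependent]
  · rw [Set.image_eq_range]
    simp [e.span_eq]
  · simp only [dif_pos hv]
    exact ⟨e.ne_zero _, he _⟩

/-- let `n₋` be as before (with its sign-coherent Chevalley basis `Fc`),
`F = ∑ ε i • F i` the principal nilpotent, `μ` regular, and `λ` generic (so that the
scalars `-(λ,α)/(μ,α)` are pairwise distinct).  Then the operator
`L = ad(-h_λ + F) ∘ ad(h_μ)⁻¹` on `n₋` — determined by
`L F_α = (-(μ,α))⁻¹ ((λ,α) • F_α + [F, F_α])` — is diagonalizable with eigenvalues
`-(λ,α)/(μ,α)`, `α` running over the positive roots. -/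
theorem principal_operator_diagonalizable (r : ℕ) (hr : 1 ≤ r)
    (G : SimpleGraph (Fin r)) [DecidableRel G.Adj] (hG : IsADE G)
    (Φ : Finset (Fin r → ℕ))
    (hΦ : ∀ v : Fin r → ℕ, v ∈ Φ ↔ cartanForm G (qcast v) (qcast v) = 2)
    (ε : Fin r → ℂ) (hε1 : ∀ i, ε i = 1 ∨ ε i = -1)
    (hε2 : ∀ i j, G.Adj i j → ε i = -ε j)
    (L : Type*) [LieRing L] [LieAlgebra ℂ L]
    (F : Fin r → L) (Fc : (Fin r → ℕ) → L)
    (hFc : ∀ i, Fc (Pi.single i 1) = F i)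
    (hind : LinearIndependent ℂ (fun v : {v // v ∈ Φ} => Fc v))
    (hspan : Submodule.span ℂ (Fc '' ↑Φ) = ⊤)
    (hbr : ∀ v ∈ Φ, ∀ i,
      (v + Pi.single i 1 ∈ Φ → ⁅F i, Fc v⁆ = ε i • Fc (v + Pi.single i 1)) ∧
      (v + Pi.single i 1 ∉ Φ → ⁅F i, Fc v⁆ = 0))
    (lam mu : Fin r → ℂ)
    (hreg : ∀ v ∈ Φ, wpair mu v ≠ 0)
    (hgeneric : ∀ v ∈ Φ, ∀ w ∈ Φ,
      -(wpair lam v) / wpair mu v = -(wpair lam w) / wpair mu w → v = w)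
    (Lop : Module.End ℂ L)
    (hLop : ∀ v ∈ Φ, Lop (Fc v)
      = (-(wpair mu v))⁻¹ • ((wpair lam v) • Fc v + ⁅∑ i, ε i • F i, Fc v⁆)) :
    ∃ vec : (Fin r → ℕ) → L,
      LinearIndependent ℂ (fun v : {v // v ∈ Φ} => vec v) ∧
      Submodule.span ℂ (vec '' ↑Φ) = ⊤ ∧
      ∀ v ∈ Φ, vec v ≠ 0 ∧
        Lop (vec v) = (-(wpair lam v) / wpair mu v) • vec v :=
  principal_operator_diagonalizable_general r Φ ε L F Fc hind hspan hbr lam mu hgeneric Lop hLop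
end

section
/- Let A be an associative unital algebra over a commutative ring, with a complete family of orthogonal idempotents e_i (i ∈ I) summing to 1. For any derivation D of A, setting u_D := Σ_i e_i D(e_i), the derivation D + ad(u_D) annihilates every e_i, and agrees with D on every central element of A. -/
/-!
Write `u = ∑ j, e j * D (e j)`. Orthogonality gives `e i * u = e i * D (e i)`, while applying the
Leibniz rule to `e j * e i` gives `e j * D (e j) * e i = δ_{ij} e i * D (e i) - e j * D (e i)`;
summing over `j` with `∑ j, e j = 1` yields `u * e i = e i * D (e i) - D (e i)`.
-/

section Leibniz

variable {A ι : Type*} [Ring A] {e : ι → A} {D : A → A}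

lemma map_zero_of_leibniz (hD : ∀ x y : A, D (x * y) = D x * y + x * D y) : D 0 = 0 := by
  simpa using hD 0 0

lemma OrthogonalIdempotents.mul_apply_mul_of_leibniz [DecidableEq ι] (he : OrthogonalIdempotents e)
    (hD : ∀ x y : A, D (x * y) = D x * y + x * D y) (i j : ι) :
    e j * D (e j) * e i = (if j = i then e i * D (e i) else 0) - e j * D (e i) := by
  have hright : D (e j) * e i = D (e j * e i) - e j * D (e i) := eq_sub_of_add_eq (hD _ _).symm
  rw [mul_assoc, hright, mul_sub, ← mul_assoc, (he.idem j).eq, he.mul_eq]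
  split_ifs with hji
  · rw [hji]
  · rw [map_zero_of_leibniz hD, mul_zero]

variable [Fintype ι]

lemma OrthogonalIdempotents.mul_sum_mul (he : OrthogonalIdempotents e) (x : ι → A) (i : ι) :
    e i * ∑ j, e j * x j = e i * x i := by
  classical
  simp [Finset.mul_sum, ← mul_assoc, he.mul_eq]

lemma CompleteOrthogonalIdempotents.sum_mul_apply_mul_of_leibniz [DecidableEq ι]
    (he : CompleteOrthogonalIdempotents e) (hD : ∀ x y : A, D (x * y) = D x * y + x * D y)
    (i : ι) : (∑ j, e j * D (e j)) * e i = e i * D (e i) - D (e i) := by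
  have hterm (j : ι) := he.toOrthogonalIdempotents.mul_apply_mul_of_leibniz hD i j
  rw [Finset.sum_mul, Finset.sum_congr rfl fun j _ => hterm j,
    Finset.sum_sub_distrib, Finset.sum_ite_eq' Finset.univ i, ← Finset.sum_mul, he.complete,
    one_mul, if_pos (Finset.mem_univ i)]

end Leibniz

/-- let `A` be an associative unital algebra over a commutative ring `R`,
with a complete family of orthogonal idempotents `e i` summing to `1`.  For any
derivation `D` of `A`, setting `u = ∑ i, e i * D (e i)`, the derivation `D + ad u`
annihilates every `e i`, and agrees with `D` on every central element of `A`. -/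
theorem derivation_idempotent_correction (R A ι : Type*) [CommRing R] [Ring A]
    [Algebra R A] [Fintype ι] [DecidableEq ι] (e : ι → A)
    (horth : ∀ i j : ι, e i * e j = if i = j then e i else 0)
    (hsum : ∑ i, e i = 1)
    (D : A →ₗ[R] A) (hD : ∀ x y : A, D (x * y) = D x * y + x * D y) :
    (∀ i : ι, D (e i) + ((∑ j, e j * D (e j)) * e i - e i * (∑ j, e j * D (e j))) = 0) ∧
    (∀ z ∈ Set.center A,
      D z + ((∑ j, e j * D (e j)) * z - z * (∑ j, e j * D (e j))) = D z) := by
  have he : CompleteOrthogonalIdempotents e :=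
    ⟨OrthogonalIdempotents.iff_mul_eq.mpr horth, hsum⟩
  refine ⟨fun i => ?_, fun z hz => ?_⟩
  · rw [he.sum_mul_apply_mul_of_leibniz hD, he.mul_sum_mul]
    abel
  · rw [hz.comm, sub_self, add_zero]
end
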